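/- Define sets α_i ⊆ ℝ recursively by α_1 = {−π/2, π/2} and α_{i+1} = {arctan(sin a) : a ∈ α_i} ∪ {arctan(sin a) + π : a ∈ α_i}. Then for every i ≥ 2 the set α_i is finite and has exactly 4 elements. -/
import Mathlib


/-- Jean's sets of singular angle differences for the `n`-trailer system:
`α₁ = {-π/2, π/2}` and `α_{i+1} = {arctan (sin a), arctan (sin a) + π : a ∈ α_i}`.
(The unused value `α₀` is set to `∅`.) -/
noncomputable def jeanAlpha : ℕ → Set ℝ
  | 0 => ∅
  | 1 => {-(Real.pi / 2), Real.pi / 2}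
  | i + 2 =>
      ((fun a => Real.arctan (Real.sin a)) '' jeanAlpha (i + 1)) ∪
        ((fun a => Real.arctan (Real.sin a) + Real.pi) '' jeanAlpha (i + 1))

open Real in
lemma jeanAlpha_struct (i : ℕ) :
    ∃ y : ℝ, 0 < y ∧ y < π / 2 ∧
      jeanAlpha (i + 2) = {y, -y, y + π, -y + π} := by
  induction i with
  | zero =>
    refine ⟨π / 4, by positivity, by linarith [pi_pos], ?_⟩
    show ((fun a => arctan (sin a)) '' {-(π / 2), π / 2}) ∪
      ((fun a => arctan (sin a) + π) '' {-(π / 2), π / 2}) = _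
    rw [Set.image_insert_eq, Set.image_singleton, Set.image_insert_eq,
      Set.image_singleton]
    simp only [Real.sin_neg, Real.sin_pi_div_two, Real.arctan_neg, Real.arctan_one]
    ext x
    simp only [Set.mem_union, Set.mem_insert_iff, Set.mem_singleton_iff]
    tauto
  | succ n ih =>
    obtain ⟨y, hy0, hy2, hset⟩ := ih
    refine ⟨arctan (sin y), by
      have := Real.arctan_strictMono (Real.sin_pos_of_pos_of_lt_pi hy0 (by linarith [pi_pos]))
      rwa [Real.arctan_zero] at this, Real.arctan_lt_pi_div_two _, ?_⟩
    show ((fun a => arctan (sin a)) '' jeanAlpha (n + 2)) ∪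
      ((fun a => arctan (sin a) + π) '' jeanAlpha (n + 2)) = _
    rw [hset]
    rw [Set.image_insert_eq, Set.image_insert_eq, Set.image_insert_eq,
      Set.image_singleton, Set.image_insert_eq, Set.image_insert_eq,
      Set.image_insert_eq, Set.image_singleton]
    simp only [Real.sin_neg, Real.arctan_neg, Real.sin_add_pi, neg_neg]
    ext x
    simp only [Set.mem_union, Set.mem_insert_iff, Set.mem_singleton_iff]
    tauto

/-- For every `i ≥ 2`, the set `α_i` is finite and has exactly `4` elements. -/
theorem jeanAlpha_card (i : ℕ) (hi : 2 ≤ i) :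
    (jeanAlpha i).Finite ∧ (jeanAlpha i).ncard = 4 := by
  obtain ⟨j, rfl⟩ : ∃ j, i = j + 2 := ⟨i - 2, by omega⟩
  obtain ⟨y, hy0, hy2, hset⟩ := jeanAlpha_struct j
  have hpi := Real.pi_pos
  rw [hset]
  have h1 : y ≠ -y := by intro h; linarith [h]
  have h2 : y ≠ y + Real.pi := by intro h; linarith [h]
  have h3 : y ≠ -y + Real.pi := by intro h; nlinarith [h]
  have h4 : -y ≠ y + Real.pi := by intro h; linarith [h]
  have h5 : -y ≠ -y + Real.pi := by intro h; linarith [h]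
  have h6 : y + Real.pi ≠ -y + Real.pi := by intro h; linarith [h]
  constructor
  · exact (Set.finite_singleton _).insert _ |>.insert _ |>.insert _
  · rw [Set.ncard_insert_of_notMem (by simp [h1, h2, h3]),
      Set.ncard_insert_of_notMem (by simp [h4, h5]),
      Set.ncard_insert_of_notMem (by simp [h6]), Set.ncard_singleton]
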